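/- arXiv:1107.3191 — 5 statements merged into one kernel-verified Lean document; each statement's English description precedes it below -/
import Mathlib

section
/- Let f be in H^3 of the circle S = R/Z with integral ∫_S f(x) dx = a_0/2. Then for every ε > 0, max_{x ∈ S} f(x)^2 ≤ ((ε+2)/24) ∫_S f_x(x)^2 dx + ((ε+2)/(4ε)) a_0^2. -/
open scoped Real
open intervalIntegral

lemma per_shift (h : ℝ → ℝ) (hp : Function.Periodic h 1) (x : ℝ) :
    ∫ t in (0:ℝ)..1, h (x + t) = ∫ t in (0:ℝ)..1, h t := by
  rw [intervalIntegral.integral_comp_add_left h x]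
  simpa using hp.intervalIntegral_add_eq x 0

lemma w_sq_int : ∫ t in (0:ℝ)..1, (t - 1/2)^2 = 1/12 := by
  rw [show (fun t : ℝ => (t - 1/2)^2) = fun t : ℝ => (fun u : ℝ => u ^ 2) (t - 1/2) from rfl,
    intervalIntegral.integral_comp_sub_right (fun u : ℝ => u ^ 2) (1/2)]
  norm_num [integral_pow]

lemma cs12 (h : ℝ → ℝ) (hc : Continuous h) :
    12 * (∫ t in (0:ℝ)..1, (t - 1/2) * h t)^2 ≤ ∫ t in (0:ℝ)..1, (h t)^2 := by
  set I := ∫ t in (0:ℝ)..1, (t - 1/2) * h t with hIdef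
  set c : ℝ := -12 * I with hc'
  have cw : Continuous fun t : ℝ => t - 1/2 := by continuity
  have h1 : IntervalIntegrable (fun t : ℝ => c^2 * (t - 1/2)^2) MeasureTheory.volume 0 1 :=
    (continuous_const.mul (cw.pow 2)).intervalIntegrable _ _
  have h2 : IntervalIntegrable (fun t : ℝ => (2*c) * ((t - 1/2) * h t)) MeasureTheory.volume 0 1 :=
    (continuous_const.mul (cw.mul hc)).intervalIntegrable _ _
  have h3 : IntervalIntegrable (fun t : ℝ => (h t)^2) MeasureTheory.volume 0 1 :=
    (hc.pow 2).intervalIntegrable _ _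
  have hnn : (0:ℝ) ≤ ∫ t in (0:ℝ)..1, (c * (t - 1/2) + h t)^2 :=
    intervalIntegral.integral_nonneg (by norm_num) (fun t _ => sq_nonneg _)
  have hexp : (∫ t in (0:ℝ)..1, (c * (t - 1/2) + h t)^2)
      = c^2 * (1/12) + (2*c) * I + ∫ t in (0:ℝ)..1, (h t)^2 := by
    rw [← w_sq_int, ← intervalIntegral.integral_const_mul, hIdef,
      ← intervalIntegral.integral_const_mul,
      ← intervalIntegral.integral_add h1 h2, ← intervalIntegral.integral_add (h1.add h2) h3]
    apply intervalIntegral.integral_congr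
    intro t _
    ring
  rw [hexp] at hnn
  nlinarith [hnn]

/-- If `f ∈ H³(𝕊)` (here: `C³` and `1`-periodic) with `∫_𝕊 f = a₀/2`, then for every `ε > 0`,
`max f² ≤ ((ε+2)/24) ∫ f_x² + ((ε+2)/(4ε)) a₀²`. -/
theorem max_sq_le_of_mean (f : ℝ → ℝ) (a0 : ℝ)
    (hf : ContDiff ℝ 3 f) (hper : Function.Periodic f 1)
    (hmean : (∫ x in (0:ℝ)..1, f x) = a0 / 2) :
    ∀ ε > (0:ℝ), ∀ x : ℝ,
      f x ^ 2 ≤ (ε + 2) / 24 * (∫ y in (0:ℝ)..1, (deriv f y) ^ 2)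
        + (ε + 2) / (4 * ε) * a0 ^ 2 := by
  intro ε hε x
  have hdf : Differentiable ℝ f := hf.differentiable (by norm_num)
  have hcd : Continuous (deriv f) := hf.continuous_deriv (by norm_num)
  have hperd : Function.Periodic (deriv f) 1 := by
    intro t
    have h1 : HasDerivAt (fun s => f (s + 1)) (deriv f (t + 1)) t := by
      simpa [Function.comp_def] using ((hdf (t + 1)).hasDerivAt).comp t ((hasDerivAt_id t).add_const 1)
    have h2 : (fun s => f (s + 1)) = f := funext fun s => hper s
    rw [h2] at h1
    exact h1.deriv.symm
  set g : ℝ → ℝ := fun t => deriv f (x + t) with hg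
  have hcg : Continuous g := hcd.comp (continuous_const.add continuous_id)
  -- translation invariance of the energy
  have hE : (∫ t in (0:ℝ)..1, (g t)^2) = ∫ y in (0:ℝ)..1, (deriv f y)^2 := by
    have hp2 : Function.Periodic (fun t => (deriv f t)^2) 1 := fun t => by
      simp [hperd t]
    exact per_shift (fun t => (deriv f t)^2) hp2 x
  -- integration by parts identity
  have hI : (∫ t in (0:ℝ)..1, (t - 1/2) * g t) = f x - a0/2 := by
    have hv : ∀ t ∈ Set.uIcc (0:ℝ) 1, HasDerivAt (fun s => f (x + s)) (g t) t := by
      intro t _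
      simpa [Function.comp_def, hg] using ((hdf (x + t)).hasDerivAt).comp t ((hasDerivAt_id t).const_add x)
    have hu : ∀ t ∈ Set.uIcc (0:ℝ) 1, HasDerivAt (fun t : ℝ => t - 1/2) ((fun _ : ℝ => (1:ℝ)) t) t :=
      fun t _ => (hasDerivAt_id t).sub_const _
    rw [intervalIntegral.integral_mul_deriv_eq_deriv_mul hu hv
      (intervalIntegrable_const) (hcg.intervalIntegrable _ _)]
    have hshift : (∫ t in (0:ℝ)..1, f (x + t)) = a0/2 := by
      rw [per_shift f hper x, hmean]
    have hfx : f (x + 1) = f x := hper x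
    simp only [one_mul]
    rw [hshift, hfx]
    ring
  have key := cs12 g hcg
  rw [hI, hE] at key
  set E := ∫ y in (0:ℝ)..1, (deriv f y)^2 with hEdef
  have hEnn : 0 ≤ E := by
    rw [hEdef]
    exact intervalIntegral.integral_nonneg (by norm_num) (fun t _ => sq_nonneg _)
  have h2e : (0:ℝ) < 2 * ε := by linarith
  have main : 2*ε*(f x)^2 ≤ 2*ε*((ε+2)/24*E) + (ε+2)/2*a0^2 := by
    nlinarith [sq_nonneg (ε * (f x - a0/2) - a0),
      mul_le_mul_of_nonneg_left key (show (0:ℝ) ≤ ε*(ε+2)/12 by positivity)]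
  have hrhs : 2*ε*((ε+2)/24*E + (ε+2)/(4*ε)*a0^2) = 2*ε*((ε+2)/24*E) + (ε+2)/2*a0^2 := by
    field_simp
    ring
  exact (mul_le_mul_iff_right₀ h2e).mp (by linarith [main, hrhs])
end

section
/- Let f be in H^1 of the circle S = R/Z with zero mean, ∫_S f(x) dx = 0. Then max_{x ∈ S} f(x)^2 ≤ (1/12) ∫_S f_x(x)^2 dx. -/
open scoped Real
open intervalIntegral

private lemma key_ineq (g : ℝ → ℝ) (hg : ContDiff ℝ 1 g) (hper : Function.Periodic g 1)
    (hmean : (∫ x in (0:ℝ)..1, g x) = 0) :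
    g 0 ^ 2 ≤ 1 / 12 * ∫ y in (0:ℝ)..1, (deriv g y) ^ 2 := by
  have hgc : Continuous g := hg.continuous
  have hg' : Continuous (deriv g) := hg.continuous_deriv le_rfl
  have hdiff : ∀ t : ℝ, HasDerivAt g (deriv g t) t := fun t =>
    (hg.differentiable one_ne_zero t).hasDerivAt
  -- integration by parts: ∫₀¹ (t - 1/2) * g'(t) dt = g 0
  have hparts : (∫ t in (0:ℝ)..1, (t - 1/2) * deriv g t) = g 0 := by
    have := intervalIntegral.integral_mul_deriv_eq_deriv_mul
      (u := fun t : ℝ => t - 1/2) (u' := fun _ : ℝ => (1:ℝ)) (v := g) (v' := deriv g)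
      (a := 0) (b := 1)
      (fun t _ => by simpa using (hasDerivAt_id t).sub_const (1/2))
      (fun t _ => hdiff t)
      (continuous_const.intervalIntegrable 0 1)
      (hg'.intervalIntegrable 0 1)
    rw [this]
    have h1 : g 1 = g 0 := by simpa using hper 0
    simp only [one_mul, hmean, h1]
    ring
  -- ∫₀¹ (t-1/2)² = 1/12
  have hqint : (∫ t in (0:ℝ)..1, (t - 1/2) ^ 2) = 1 / 12 := by
    have h : ∀ t : ℝ, (t - 1/2) ^ 2 = t ^ 2 - t + 1/4 := fun t => by ring
    simp_rw [h]
    have j1 : IntervalIntegrable (fun t : ℝ => t ^ 2 - t) MeasureTheory.volume 0 1 := by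
      apply Continuous.intervalIntegrable; fun_prop
    have j2 : IntervalIntegrable (fun _ : ℝ => (1:ℝ)/4) MeasureTheory.volume 0 1 := by
      apply Continuous.intervalIntegrable; fun_prop
    have j3 : IntervalIntegrable (fun t : ℝ => t ^ 2) MeasureTheory.volume 0 1 := by
      apply Continuous.intervalIntegrable; fun_prop
    have j4 : IntervalIntegrable (fun t : ℝ => t) MeasureTheory.volume 0 1 := by
      apply Continuous.intervalIntegrable; fun_prop
    rw [intervalIntegral.integral_add j1 j2, intervalIntegral.integral_sub j3 j4]
    simp [integral_pow, integral_id]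
    norm_num
  set A : ℝ := g 0 with hA
  set I : ℝ := ∫ y in (0:ℝ)..1, (deriv g y) ^ 2 with hI
  -- 0 ≤ ∫ (g' - 12A(t-1/2))² = I - 24A² + 144A²·(1/12) = I - 12A²
  have hnn : (0:ℝ) ≤ ∫ t in (0:ℝ)..1, (deriv g t - 12 * A * (t - 1/2)) ^ 2 := by
    apply intervalIntegral.integral_nonneg (by norm_num)
    intro t _; positivity
  have hexp : (∫ t in (0:ℝ)..1, (deriv g t - 12 * A * (t - 1/2)) ^ 2)
      = I - 24 * A * A + 144 * A ^ 2 * (1/12) := by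
    have h : ∀ t : ℝ, (deriv g t - 12 * A * (t - 1/2)) ^ 2
        = (deriv g t) ^ 2 - 24 * A * ((t - 1/2) * deriv g t) + 144 * A ^ 2 * (t - 1/2) ^ 2 :=
      fun t => by ring
    simp_rw [h]
    have i1 : IntervalIntegrable (fun t => (deriv g t) ^ 2) MeasureTheory.volume 0 1 :=
      (hg'.pow 2).intervalIntegrable 0 1
    have i2 : IntervalIntegrable (fun t : ℝ => 24 * A * ((t - 1/2) * deriv g t))
        MeasureTheory.volume 0 1 := by
      apply Continuous.intervalIntegrable; fun_prop
    have i3 : IntervalIntegrable (fun t : ℝ => 144 * A ^ 2 * (t - 1/2) ^ 2)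
        MeasureTheory.volume 0 1 := by
      apply Continuous.intervalIntegrable; fun_prop
    rw [intervalIntegral.integral_add (i1.sub i2) i3, intervalIntegral.integral_sub i1 i2,
      intervalIntegral.integral_const_mul, intervalIntegral.integral_const_mul,
      hparts, hqint]
  have : 0 ≤ I - 12 * A ^ 2 := by
    have := hnn
    rw [hexp] at this
    linarith [this]
  linarith

/-- If `f ∈ H¹(𝕊)` (here: `C¹` and `1`-periodic) has zero mean on the circle, then
`max f² ≤ (1/12) ∫ f_x²`. -/
theorem max_sq_le_of_zero_mean (f : ℝ → ℝ)
    (hf : ContDiff ℝ 1 f) (hper : Function.Periodic f 1)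
    (hmean : (∫ x in (0:ℝ)..1, f x) = 0) :
    ∀ x : ℝ, f x ^ 2 ≤ 1 / 12 * ∫ y in (0:ℝ)..1, (deriv f y) ^ 2 := by
  intro x
  set g : ℝ → ℝ := fun t => f (x + t) with hgdef
  have hgc : ContDiff ℝ 1 g := hf.comp (contDiff_const.add contDiff_id)
  have hgper : Function.Periodic g 1 := fun t => by
    simp only [hgdef]
    rw [← add_assoc]
    exact hper (x + t)
  have hgmean : (∫ t in (0:ℝ)..1, g t) = 0 := by
    simp only [hgdef]
    rw [intervalIntegral.integral_comp_add_left f x]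
    have := hper.intervalIntegral_add_eq x 0
    simpa using this.trans (by simpa using hmean)
  have hderiv : ∀ t, deriv g t = deriv f (x + t) := fun t => deriv_comp_const_add f x t
  have hperd : Function.Periodic (deriv f) 1 := by
    intro t
    have : (fun y => f (y + 1)) = f := funext fun y => hper y
    calc deriv f (t + 1) = deriv (fun y => f (y + 1)) t := (deriv_comp_add_const f 1 t).symm
      _ = deriv f t := by rw [this]
  have hint : (∫ y in (0:ℝ)..1, (deriv g y) ^ 2) = ∫ y in (0:ℝ)..1, (deriv f y) ^ 2 := by
    simp_rw [hderiv]
    rw [intervalIntegral.integral_comp_add_left (fun y => (deriv f y) ^ 2) x]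
    have hper2 : Function.Periodic (fun y => (deriv f y) ^ 2) 1 := fun t => by
      simp [hperd t]
    have := hper2.intervalIntegral_add_eq x 0
    simpa using this
  have h0 : g 0 = f x := by simp [hgdef]
  have := key_ineq g hgc hgper hgmean
  rw [h0, hint] at this
  exact this
end

section
/- Let A = μ - ∂_x^2 on the circle S = R/Z. Then for any smooth periodic function w, A^{-1}∂_x w(x) = (x - 1/2) ∫_0^1 w(y) dy - ∫_0^x w(y) dy + ∫_0^1 ∫_0^x w(y) dy dx, where the right-hand side is understood as a 1-periodic function of x ∈ [0,1). -/
open scoped Real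
open intervalIntegral

/-- For `A = μ - ∂ₓ²` on `𝕊 = ℝ/ℤ` and any smooth periodic `w`,
`A⁻¹ ∂ₓ w (x) = (x - 1/2)∫₀¹ w - ∫₀ˣ w + ∫₀¹∫₀ˣ w dy dx`, the right-hand side being understood
as a `1`-periodic function of `x ∈ [0,1)` (realized here via the fractional part);
i.e. applying `A` to this function `h` gives `∂ₓ w`. -/
theorem inv_A_dx (w : ℝ → ℝ) (hw : ContDiff ℝ (⊤ : ℕ∞) w) (hper : Function.Periodic w 1)
    (h : ℝ → ℝ)
    (hh : ∀ x : ℝ, h x = (Int.fract x - 1 / 2) * (∫ y in (0:ℝ)..1, w y)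
        - (∫ y in (0:ℝ)..(Int.fract x), w y)
        + ∫ z in (0:ℝ)..1, ∫ y in (0:ℝ)..z, w y) :
    ∀ x : ℝ, deriv w x = (∫ y in (0:ℝ)..1, h y) - deriv (deriv h) x := by
  have hwc : Continuous w := hw.continuous
  have hint : ∀ t₁ t₂ : ℝ, IntervalIntegrable w MeasureTheory.volume t₁ t₂ :=
    fun t₁ t₂ => hwc.intervalIntegrable t₁ t₂
  set I : ℝ := ∫ y in (0:ℝ)..1, w y with hI
  set F : ℝ → ℝ := fun x => ∫ y in (0:ℝ)..x, w y with hF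
  set C : ℝ := ∫ z in (0:ℝ)..1, F z with hC
  -- h coincides everywhere with the "global" function G
  have hG : ∀ x : ℝ, h x = (x - 1 / 2) * I - F x + C := by
    intro x
    rw [hh x]
    have hfr : Int.fract x = x - (⌊x⌋ : ℝ) := Int.self_sub_floor x ▸ rfl
    have key : F x - F (Int.fract x) = (⌊x⌋ : ℝ) * I := by
      have h1 : F x - F (Int.fract x) = ∫ y in (Int.fract x)..x, w y := by
        simp only [hF]
        have := intervalIntegral.integral_add_adjacent_intervals
          (hint 0 (Int.fract x)) (hint (Int.fract x) x)
        linarith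
      have h2 : (Int.fract x) + (⌊x⌋ : ℤ) • (1:ℝ) = x := by
        rw [zsmul_eq_mul, mul_one, hfr]; ring
      have h3 : ∫ y in (Int.fract x)..(Int.fract x + (⌊x⌋ : ℤ) • (1:ℝ)), w y
          = (⌊x⌋ : ℤ) • ∫ y in (Int.fract x)..(Int.fract x + 1), w y :=
        hper.intervalIntegral_add_zsmul_eq ⌊x⌋ (Int.fract x) hint
      have h4 : ∫ y in (Int.fract x)..(Int.fract x + 1), w y = I := by
        rw [hI]
        simpa using hper.intervalIntegral_add_eq (Int.fract x) 0
      rw [h2, h4] at h3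
      rw [h1, h3, zsmul_eq_mul]
    have : (Int.fract x - 1 / 2) * I - F (Int.fract x)
        = (x - 1 / 2) * I - F x := by
      rw [hfr] at key ⊢
      linear_combination key
    rw [this]
  have hGfun : h = fun x => (x - 1 / 2) * I - F x + C := funext hG
  -- derivative of h
  have hderiv : deriv h = fun x => I - w x := by
    funext x
    rw [hGfun]
    have h1 : HasDerivAt (fun x : ℝ => (x - 1 / 2) * I) I x := by
      have := ((hasDerivAt_id x).sub_const (1/2)).mul_const I
      rw [one_mul] at this
      exact this
    have h2 : HasDerivAt F (w x) x := (hwc.integral_hasStrictDerivAt 0 x).hasDerivAt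
    exact (((h1.sub h2).add_const C)).deriv
  -- second derivative
  have hderiv2 : deriv (deriv h) = fun x => -deriv w x := by
    funext x
    rw [hderiv]
    have hwd : DifferentiableAt ℝ w x := (hw.differentiable (by simp)) x
    rw [deriv_const_sub]
  -- integral of h
  have hintF : ∀ t₁ t₂ : ℝ, IntervalIntegrable F MeasureTheory.volume t₁ t₂ :=
    fun t₁ t₂ => (intervalIntegral.continuous_primitive hint 0).intervalIntegrable t₁ t₂
  have hIh : (∫ y in (0:ℝ)..1, h y) = 0 := by
    rw [hGfun]
    have e1 : (∫ y in (0:ℝ)..1, ((y - 1 / 2) * I - F y + C))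
        = (∫ y in (0:ℝ)..1, (y - 1 / 2) * I) - (∫ y in (0:ℝ)..1, F y)
          + (∫ y in (0:ℝ)..1, C) := by
      rw [intervalIntegral.integral_add, intervalIntegral.integral_sub]
      · exact (Continuous.intervalIntegrable (by continuity) 0 1)
      · exact hintF 0 1
      · exact ((Continuous.intervalIntegrable (by continuity) 0 1).sub (hintF 0 1))
      · exact intervalIntegrable_const
    rw [e1]
    have e2 : (∫ y in (0:ℝ)..1, (y - 1 / 2) * I) = 0 := by
      rw [intervalIntegral.integral_mul_const]
      have : (∫ y in (0:ℝ)..1, (y - 1 / 2)) = 0 := by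
        simp [intervalIntegral.integral_sub intervalIntegrable_id intervalIntegrable_const]
      rw [this]; ring
    rw [e2]
    simp [hC]
  intro x
  rw [hIh, hderiv2]
  ring
end

section
/- Let u be a smooth solution of the μ-CH equation on [0,T) × S with μ(u(t)) = μ_0 constant in time and ∫_S u_x(t,x)^2 dx = μ_1^2 constant in time. Then for all t ∈ [0,T), the L^∞ norm of u(t,·) satisfies ‖u(t,·)‖_{L^∞} ≤ |μ_0| + (√3/6) μ_1. -/
open scoped Real
open intervalIntegral

/-- Cauchy–Schwarz for interval integrals of continuous functions. -/
lemma cs_interval (φ ψ : ℝ → ℝ) (hφ : Continuous φ) (hψ : Continuous ψ) :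
    (∫ s in (0:ℝ)..1, φ s * ψ s) ^ 2
      ≤ (∫ s in (0:ℝ)..1, φ s ^ 2) * (∫ s in (0:ℝ)..1, ψ s ^ 2) := by
  set A := ∫ s in (0:ℝ)..1, φ s ^ 2 with hA
  set B := ∫ s in (0:ℝ)..1, φ s * ψ s with hB
  set C := ∫ s in (0:ℝ)..1, ψ s ^ 2 with hC
  have key : ∀ lam : ℝ, 0 ≤ A * (lam * lam) + (2 * B) * lam + C := by
    intro lam
    have h1 : IntervalIntegrable (fun s => φ s ^ 2) MeasureTheory.volume 0 1 :=
      (hφ.pow 2).intervalIntegrable 0 1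
    have h2 : IntervalIntegrable (fun s => φ s * ψ s) MeasureTheory.volume 0 1 :=
      (hφ.mul hψ).intervalIntegrable 0 1
    have h3 : IntervalIntegrable (fun s => ψ s ^ 2) MeasureTheory.volume 0 1 :=
      (hψ.pow 2).intervalIntegrable 0 1
    have expand : (∫ s in (0:ℝ)..1, (lam * φ s + ψ s) ^ 2)
        = A * (lam * lam) + (2 * B) * lam + C := by
      have : (fun s => (lam * φ s + ψ s) ^ 2)
          = fun s => (lam * lam) * φ s ^ 2 + ((2 * lam) * (φ s * ψ s) + ψ s ^ 2) := by
        funext s; ring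
      rw [this, intervalIntegral.integral_add ((h1.const_mul _))
        ((h2.const_mul _).add h3),
        intervalIntegral.integral_add (h2.const_mul _) h3,
        intervalIntegral.integral_const_mul, intervalIntegral.integral_const_mul]
      ring
    rw [← expand]
    exact intervalIntegral.integral_nonneg (by norm_num) (fun s _ => sq_nonneg _)
  have hd := discrim_le_zero key
  rw [discrim] at hd
  nlinarith [hd]

/-- For a smooth solution `u` of the μ-CH equation on `[0,T) × 𝕊` with `μ(u(t)) = μ₀` and
`∫_𝕊 u_x(t)² = μ₁²` constant in time, one has `‖u(t,·)‖_{L^∞} ≤ |μ₀| + (√3/6) μ₁`. -/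
theorem mu_CH_Linfty_bound (T κ μ₀ μ₁ : ℝ) (hT : 0 < T) (hμ₁ : 0 ≤ μ₁) (u : ℝ → ℝ → ℝ)
    (hregx : ∀ t ∈ Set.Ico (0:ℝ) T, ContDiff ℝ (⊤ : ℕ∞) (u t))
    (hregt : ∀ x : ℝ, ContDiffOn ℝ (⊤ : ℕ∞) (fun t => u t x) (Set.Ico (0:ℝ) T))
    (hper : ∀ t x : ℝ, u t (x + 1) = u t x)
    (hpde : ∀ t ∈ Set.Ico (0:ℝ) T, ∀ x : ℝ,
      (∫ y in (0:ℝ)..1, deriv (fun s => u s y) t)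
        - deriv (fun s => deriv (deriv (u s)) x) t
        + 2 * (∫ y in (0:ℝ)..1, u t y) * deriv (u t) x
        + 2 * κ * deriv (u t) x
      = 2 * deriv (u t) x * deriv (deriv (u t)) x
        + u t x * deriv (deriv (deriv (u t))) x)
    (hmean : ∀ t ∈ Set.Ico (0:ℝ) T, (∫ x in (0:ℝ)..1, u t x) = μ₀)
    (henergy : ∀ t ∈ Set.Ico (0:ℝ) T, (∫ x in (0:ℝ)..1, (deriv (u t) x) ^ 2) = μ₁ ^ 2) :
    ∀ t ∈ Set.Ico (0:ℝ) T, ∀ x : ℝ, |u t x| ≤ |μ₀| + Real.sqrt 3 / 6 * μ₁ := by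
  intro t ht x
  set f := u t with hf
  have hsm : ContDiff ℝ (⊤ : ℕ∞) f := hregx t ht
  have hfd : Differentiable ℝ f := hsm.differentiable (by simp)
  have hf'c : Continuous (deriv f) := hsm.continuous_deriv (by simp)
  have hpf : Function.Periodic f 1 := fun y => hper t y
  have hpf' : Function.Periodic (deriv f) 1 := by
    intro y
    have : (fun z => f (z + 1)) = f := funext fun z => hper t z
    calc deriv f (y + 1) = deriv (fun z => f (z + 1)) y := (deriv_comp_add_const f 1 y).symm
    _ = deriv f y := by rw [this]
  -- integration by parts: ∫₀¹ (s - 1/2) f'(x+s) ds = f x - μ₀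
  set B := ∫ s in (0:ℝ)..1, (s - 1/2) * deriv f (x + s) with hBdef
  have hint_shift : (∫ s in (0:ℝ)..1, f (x + s)) = μ₀ := by
    rw [intervalIntegral.integral_comp_add_left f x]
    have := hpf.intervalIntegral_add_eq x 0
    simpa using this.trans (by simpa using hmean t ht)
  have hB : B = f x - μ₀ := by
    have hu : ∀ s ∈ Set.uIcc (0:ℝ) 1, HasDerivAt (fun s : ℝ => s - 1/2) 1 s := by
      intro s _
      simpa using (hasDerivAt_id s).sub_const (1/2 : ℝ)
    have hv : ∀ s ∈ Set.uIcc (0:ℝ) 1,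
        HasDerivAt (fun s => f (x + s)) (deriv f (x + s)) s := by
      intro s _
      exact ((hfd (x + s)).hasDerivAt).comp_const_add x s
    have hu' : IntervalIntegrable (fun _ : ℝ => (1:ℝ)) MeasureTheory.volume 0 1 :=
      intervalIntegrable_const
    have hv' : IntervalIntegrable (fun s => deriv f (x + s)) MeasureTheory.volume 0 1 :=
      (hf'c.comp (continuous_const.add continuous_id)).intervalIntegrable 0 1
    have ibp := intervalIntegral.integral_mul_deriv_eq_deriv_mul hu hv hu' hv'
    rw [hBdef, ibp]
    simp only [one_mul]
    rw [hint_shift]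
    have hper1 : f (x + 1) = f x := hper t x
    rw [hper1]
    ring
  -- energy shift
  have henergy_shift : (∫ s in (0:ℝ)..1, (deriv f (x + s)) ^ 2) = μ₁ ^ 2 := by
    rw [intervalIntegral.integral_comp_add_left (fun y => (deriv f y) ^ 2) x]
    have hp2 : Function.Periodic (fun y => (deriv f y) ^ 2) 1 := hpf'.comp (· ^ 2)
    have := hp2.intervalIntegral_add_eq x 0
    simpa using this.trans (by simpa using henergy t ht)
  -- weight integral
  have hw : (∫ s in (0:ℝ)..1, (s - 1/2) ^ 2) = 1 / 12 := by
    rw [intervalIntegral.integral_comp_sub_right (fun y => y ^ 2) (1/2)]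
    rw [integral_pow]
    norm_num
  -- Cauchy–Schwarz
  have hcs := cs_interval (fun s => s - 1/2) (fun s => deriv f (x + s))
    (continuous_id.sub continuous_const)
    (hf'c.comp (continuous_const.add continuous_id))
  rw [hw, henergy_shift, ← hBdef] at hcs
  -- conclude
  have hr : (0:ℝ) ≤ Real.sqrt 3 / 6 * μ₁ := by positivity
  have hsq : (Real.sqrt 3 / 6 * μ₁) ^ 2 = 1 / 12 * μ₁ ^ 2 := by
    have h3 : Real.sqrt 3 ^ 2 = 3 := Real.sq_sqrt (by norm_num)
    nlinarith [h3]
  have habsB : |B| ≤ Real.sqrt 3 / 6 * μ₁ := by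
    have h2 : B ^ 2 ≤ (Real.sqrt 3 / 6 * μ₁) ^ 2 := by rw [hsq]; linarith
    calc |B| = Real.sqrt (B ^ 2) := (Real.sqrt_sq_eq_abs B).symm
    _ ≤ Real.sqrt ((Real.sqrt 3 / 6 * μ₁) ^ 2) := Real.sqrt_le_sqrt h2
    _ = Real.sqrt 3 / 6 * μ₁ := Real.sqrt_sq hr
  have : f x = μ₀ + B := by rw [hB]; ring
  rw [this]
  calc |μ₀ + B| ≤ |μ₀| + |B| := abs_add_le _ _
  _ ≤ |μ₀| + Real.sqrt 3 / 6 * μ₁ := by linarith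
end

section
/- Let u be a smooth solution of the μ-CH equation on [0,T) × S with conserved quantities μ_0 = μ(u(t)) and μ_1^2 = ∫_S u_x(t,·)^2 dx. Then ‖u(t,·)‖_{L^2}^2 ≤ μ_1^2/(4π^2) + μ_0^2, and hence ‖u(t,·)‖_{H^1}^2 ≤ ((1+4π^2)/(4π^2)) μ_1^2 + μ_0^2 for all t ∈ [0,T). -/
open scoped Real
open intervalIntegral

open scoped Real
open intervalIntegral MeasureTheory AddCircle Complex
open scoped ENNReal

instance fact_zero_lt_one_real : Fact ((0:ℝ) < 1) := ⟨one_pos⟩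

/-- Parseval for a real continuous function with matching endpoints, on `[0,1]`. -/
lemma parseval_aux (h : ℝ → ℝ) (hc : Continuous h) (hp : h 0 = h 1) :
    Summable (fun n : ℤ => ‖fourierCoeff (liftIco 1 0 (fun x => (h x : ℂ))) n‖ ^ 2) ∧
    (∑' n : ℤ, ‖fourierCoeff (liftIco 1 0 (fun x => (h x : ℂ))) n‖ ^ 2)
      = ∫ x in (0:ℝ)..1, (h x) ^ 2 := by
  set H : ℝ → ℂ := fun x => (h x : ℂ) with hH
  have hHc : Continuous H := Complex.continuous_ofReal.comp hc
  have hH01 : H 0 = H (0 + 1) := by simp [hH, hp]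
  have hgc : Continuous (liftIco 1 0 H) := liftIco_continuous hH01 hHc.continuousOn
  set g : C(AddCircle 1, ℂ) := ⟨liftIco 1 0 H, hgc⟩ with hg
  set gL := ContinuousMap.toLp (E := ℂ) 2 haarAddCircle ℂ g with hgL
  have hcoeff : ∀ n : ℤ, fourierCoeff (↑gL : AddCircle (1:ℝ) → ℂ) n = fourierCoeff (liftIco 1 0 H) n := by
    intro n
    exact fourierCoeff_toLp g n
  -- summability
  have hsum : Summable (fun n : ℤ => ‖fourierCoeff (liftIco 1 0 H) n‖ ^ 2) := by
    have hm := lp.memℓp (fourierBasis.repr gL)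
    rw [memℓp_gen_iff (by norm_num)] at hm
    have : (fun n : ℤ => ‖fourierBasis.repr gL n‖ ^ (2:ℝ≥0∞).toReal)
        = fun n : ℤ => ‖fourierCoeff (liftIco 1 0 H) n‖ ^ 2 := by
      funext n
      rw [fourierBasis_repr, hcoeff n]
      norm_num
    rwa [this] at hm
  refine ⟨hsum, ?_⟩
  have hpars := tsum_sq_fourierCoeff gL
  simp_rw [hcoeff] at hpars
  rw [hpars]
  -- integral over haar = integral over volume = interval integral
  have hvol : (volume : Measure (AddCircle (1:ℝ))) = haarAddCircle := by
    rw [volume_eq_smul_haarAddCircle]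
    simp
  have h1 : (∫ t : AddCircle 1, ‖gL t‖ ^ 2 ∂haarAddCircle)
      = ∫ t : AddCircle 1, ‖g t‖ ^ 2 ∂haarAddCircle := by
    apply MeasureTheory.integral_congr_ae
    filter_upwards [ContinuousMap.coeFn_toLp (𝕜 := ℂ) (p := 2) haarAddCircle g] with t ht
    rw [hgL, ht]
  rw [h1, ← hvol]
  have h2 : (∫ x in (0:ℝ)..(0+1), ‖g (x : AddCircle (1:ℝ))‖ ^ 2)
      = ∫ t : AddCircle (1:ℝ), ‖g t‖ ^ 2 := AddCircle.intervalIntegral_preimage 1 0 (fun t => ‖g t‖ ^ 2)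
  rw [← h2, zero_add]
  apply intervalIntegral.integral_congr
  intro x hx
  rw [Set.uIcc_of_le (by norm_num : (0:ℝ) ≤ 1)] at hx
  have hgx : g (x : AddCircle (1:ℝ)) = H x := by
    rcases eq_or_lt_of_le hx.2 with h1' | h1'
    · have : ((x : ℝ) : AddCircle (1:ℝ)) = ((0 : ℝ) : AddCircle (1:ℝ)) := by
        rw [h1']
        exact_mod_cast AddCircle.coe_period (p := (1:ℝ))
      show liftIco 1 0 H _ = _
      rw [this, liftIco_zero_coe_apply (by constructor <;> norm_num)]
      rw [h1']; exact hH01.trans (by norm_num)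
    · show liftIco 1 0 H _ = _
      exact liftIco_zero_coe_apply ⟨hx.1, h1'⟩
  show ‖g (x : AddCircle (1:ℝ))‖ ^ 2 = h x ^ 2
  rw [hgx]
  simp [hH, Complex.norm_real, Real.norm_eq_abs, sq_abs]

/-- Fourier coefficient of a smooth periodic function in terms of that of its derivative. -/
lemma coeff_deriv_aux (f : ℝ → ℝ) (hf : ContDiff ℝ (⊤ : ℕ∞) f) (hper : ∀ x, f (x + 1) = f x)
    {n : ℤ} (hn : n ≠ 0) :
    fourierCoeff (liftIco 1 0 (fun x => (f x : ℂ))) n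
      = fourierCoeff (liftIco 1 0 (fun x => ((deriv f x : ℝ) : ℂ))) n / (2 * π * Complex.I * n) := by
  set F : ℝ → ℂ := fun x => (f x : ℂ)
  set F' : ℝ → ℂ := fun x => ((deriv f x : ℝ) : ℂ)
  have hab : (0:ℝ) < 0 + 1 := lt_add_of_pos_right 0 Fact.out
  have e1 : fourierCoeff (liftIco 1 0 F) n = fourierCoeffOn hab F n :=
    fourierCoeff_liftIco_eq F n
  have e2 : fourierCoeff (liftIco 1 0 F') n = fourierCoeffOn hab F' n :=
    fourierCoeff_liftIco_eq F' n
  have hder : ∀ x ∈ Set.uIcc (0:ℝ) (0+1), HasDerivAt F (F' x) x := by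
    intro x _
    exact (hf.differentiable (by simp) x).hasDerivAt.ofReal_comp
  have hint : IntervalIntegrable F' volume 0 (0+1) :=
    (Complex.continuous_ofReal.comp (hf.continuous_deriv (by simp))).intervalIntegrable _ _
  have := fourierCoeffOn_of_hasDerivAt hab hn hder hint
  rw [e1, e2, this]
  have hF : F (0+1) = F 0 := by
    show ((f (0+1) : ℝ) : ℂ) = ((f 0 : ℝ) : ℂ)
    exact_mod_cast congrArg Complex.ofReal (hper 0)
  rw [hF]
  have hpin : (2 * (π:ℂ) * Complex.I * n) ≠ 0 := by
    simp [Real.pi_ne_zero, Complex.I_ne_zero, hn]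
  field_simp
  simp

/-- **Wirtinger's inequality** on the unit circle: a smooth 1-periodic mean-zero function
satisfies `∫ f² ≤ (1/(4π²)) ∫ f'²`. -/
lemma wirtinger (f : ℝ → ℝ) (hf : ContDiff ℝ (⊤ : ℕ∞) f) (hper : ∀ x, f (x + 1) = f x)
    (hmean : (∫ x in (0:ℝ)..1, f x) = 0) :
    (∫ x in (0:ℝ)..1, f x ^ 2) ≤ (1 / (4 * π ^ 2)) * ∫ x in (0:ℝ)..1, (deriv f x) ^ 2 := by
  have hfc := hf.continuous
  have hdc := hf.continuous_deriv (by simp)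
  have hperd : ∀ x : ℝ, deriv f (x + 1) = deriv f x := by
    intro x
    have hfun : (fun y : ℝ => f (y + 1)) = f := funext hper
    have h1 : deriv (fun y : ℝ => f (y + 1)) x = deriv f (x + 1) :=
      deriv_comp_add_const f 1 x
    rw [hfun] at h1
    exact h1.symm
  obtain ⟨S1, E1⟩ := parseval_aux f hfc (by simpa using (hper 0).symm)
  obtain ⟨S2, E2⟩ := parseval_aux (deriv f) hdc (by simpa using (hperd 0).symm)
  -- the zeroth coefficient vanishes
  have hc0 : fourierCoeff (AddCircle.liftIco 1 0 (fun x => ((f x : ℝ) : ℂ))) 0 = 0 := by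
    rw [fourierCoeff_liftIco_eq, fourierCoeffOn_eq_integral]
    simp only [neg_zero, fourier_zero, one_smul, sub_zero, zero_add]
    rw [intervalIntegral.integral_ofReal, hmean]
    norm_num
  -- termwise comparison
  have hterm : ∀ n : ℤ,
      ‖fourierCoeff (AddCircle.liftIco 1 0 (fun x => ((f x : ℝ) : ℂ))) n‖ ^ 2
        ≤ (1 / (4 * π ^ 2)) *
          ‖fourierCoeff (AddCircle.liftIco 1 0 (fun x => ((deriv f x : ℝ) : ℂ))) n‖ ^ 2 := by
    intro n
    rcases eq_or_ne n 0 with rfl | hn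
    · rw [hc0]
      have : (0:ℝ) ≤ (1 / (4 * π ^ 2)) *
          ‖fourierCoeff (AddCircle.liftIco 1 0 (fun x => ((deriv f x : ℝ) : ℂ))) 0‖ ^ 2 := by
        positivity
      simpa using this
    · rw [coeff_deriv_aux f hf hper hn]
      rw [norm_div, div_pow]
      have hnorm : ‖(2 * (π:ℂ) * Complex.I * n)‖ ^ 2 = 4 * π ^ 2 * (n:ℝ) ^ 2 := by
        simp only [norm_mul, Complex.norm_I, Complex.norm_ofNat, mul_one,
          Complex.norm_real, Complex.norm_intCast, Real.norm_eq_abs]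
        rw [abs_of_pos Real.pi_pos]
        ring_nf
        rw [_root_.sq_abs]
      rw [hnorm, div_eq_mul_inv, mul_comm]
      apply mul_le_mul_of_nonneg_right _ (by positivity)
      rw [one_div]
      apply inv_anti₀ (by positivity)
      have hn1 : (1:ℝ) ≤ (n:ℝ) ^ 2 := by
        have := Int.one_le_abs hn
        calc (1:ℝ) = (1:ℝ)^2 := by norm_num
        _ ≤ (|n| : ℝ) ^ 2 := by
            apply pow_le_pow_left₀ (by norm_num)
            exact_mod_cast this
        _ = (n:ℝ) ^ 2 := by push_cast; rw [_root_.sq_abs]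
      nlinarith [Real.pi_pos, sq_nonneg (π : ℝ)]
  calc (∫ x in (0:ℝ)..1, f x ^ 2)
      = ∑' n : ℤ, ‖fourierCoeff (AddCircle.liftIco 1 0 (fun x => ((f x : ℝ) : ℂ))) n‖ ^ 2 :=
        E1.symm
    _ ≤ ∑' n : ℤ, (1 / (4 * π ^ 2)) *
          ‖fourierCoeff (AddCircle.liftIco 1 0 (fun x => ((deriv f x : ℝ) : ℂ))) n‖ ^ 2 :=
        Summable.tsum_le_tsum hterm S1 (S2.mul_left _)
    _ = (1 / (4 * π ^ 2)) * ∫ x in (0:ℝ)..1, (deriv f x) ^ 2 := by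
        rw [tsum_mul_left, E2]

/-- For a smooth solution `u` of the μ-CH equation on `[0,T) × 𝕊` with conserved `μ₀ = μ(u(t))`
and `μ₁² = ∫ u_x(t)²`, one has `‖u(t)‖_{L²}² ≤ μ₁²/(4π²) + μ₀²` and hence
`‖u(t)‖_{H¹}² ≤ ((1+4π²)/(4π²)) μ₁² + μ₀²`. -/
theorem mu_CH_L2_H1_bound (T κ μ₀ μ₁ : ℝ) (hT : 0 < T) (hμ₁ : 0 ≤ μ₁) (u : ℝ → ℝ → ℝ)
    (hregx : ∀ t ∈ Set.Ico (0:ℝ) T, ContDiff ℝ (⊤ : ℕ∞) (u t))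
    (hregt : ∀ x : ℝ, ContDiffOn ℝ (⊤ : ℕ∞) (fun t => u t x) (Set.Ico (0:ℝ) T))
    (hper : ∀ t x : ℝ, u t (x + 1) = u t x)
    (hpde : ∀ t ∈ Set.Ico (0:ℝ) T, ∀ x : ℝ,
      (∫ y in (0:ℝ)..1, deriv (fun s => u s y) t)
        - deriv (fun s => deriv (deriv (u s)) x) t
        + 2 * (∫ y in (0:ℝ)..1, u t y) * deriv (u t) x
        + 2 * κ * deriv (u t) x
      = 2 * deriv (u t) x * deriv (deriv (u t)) x
        + u t x * deriv (deriv (deriv (u t))) x)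
    (hmean : ∀ t ∈ Set.Ico (0:ℝ) T, (∫ x in (0:ℝ)..1, u t x) = μ₀)
    (henergy : ∀ t ∈ Set.Ico (0:ℝ) T, (∫ x in (0:ℝ)..1, (deriv (u t) x) ^ 2) = μ₁ ^ 2) :
    ∀ t ∈ Set.Ico (0:ℝ) T,
      (∫ x in (0:ℝ)..1, (u t x) ^ 2) ≤ μ₁ ^ 2 / (4 * Real.pi ^ 2) + μ₀ ^ 2 ∧
      (∫ x in (0:ℝ)..1, (u t x) ^ 2) + (∫ x in (0:ℝ)..1, (deriv (u t) x) ^ 2)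
        ≤ (1 + 4 * Real.pi ^ 2) / (4 * Real.pi ^ 2) * μ₁ ^ 2 + μ₀ ^ 2 := by
  intro t ht
  have hu := hregx t ht
  set v : ℝ → ℝ := fun x => u t x - μ₀ with hv
  have hvc : ContDiff ℝ (⊤ : ℕ∞) v := hu.sub contDiff_const
  have hvper : ∀ x, v (x + 1) = v x := fun x => by simp [hv, hper t x]
  have hvd : deriv v = deriv (u t) := by
    funext x
    exact deriv_sub_const μ₀
  have hint_u : IntervalIntegrable (u t) MeasureTheory.volume 0 1 :=
    hu.continuous.intervalIntegrable _ _
  have hvmean : (∫ x in (0:ℝ)..1, v x) = 0 := by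
    rw [hv]
    rw [intervalIntegral.integral_sub hint_u intervalIntegrable_const, hmean t ht]
    simp
  have W := wirtinger v hvc hvper hvmean
  rw [hvd, henergy t ht] at W
  have hexp : (∫ x in (0:ℝ)..1, (u t x) ^ 2)
      = (∫ x in (0:ℝ)..1, v x ^ 2) + μ₀ ^ 2 := by
    have h1 : ∀ x ∈ Set.uIcc (0:ℝ) 1, (fun x => (u t x) ^ 2) x
        = (fun x => v x ^ 2 + (2 * μ₀ * v x + μ₀ ^ 2)) x := by
      intro x _
      simp only [hv]
      ring
    rw [intervalIntegral.integral_congr h1,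
      intervalIntegral.integral_add (f := fun x => v x ^ 2) (g := fun x => 2 * μ₀ * v x + μ₀ ^ 2) ((hvc.continuous.pow 2).intervalIntegrable _ _)
        (((continuous_const.mul hvc.continuous).add continuous_const).intervalIntegrable _ _),
      intervalIntegral.integral_add (f := fun x => 2 * μ₀ * v x) (g := fun _ => μ₀ ^ 2) ((continuous_const.mul hvc.continuous).intervalIntegrable _ _)
        intervalIntegrable_const,
      intervalIntegral.integral_const_mul, hvmean]
    simp
  have hpi : (0:ℝ) < 4 * Real.pi ^ 2 := by positivity
  have heq1 : (1 / (4 * Real.pi ^ 2)) * μ₁ ^ 2 = μ₁ ^ 2 / (4 * Real.pi ^ 2) := by ring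
  have heq2 : (1 + 4 * Real.pi ^ 2) / (4 * Real.pi ^ 2) * μ₁ ^ 2
      = μ₁ ^ 2 / (4 * Real.pi ^ 2) + μ₁ ^ 2 := by
    field_simp
  constructor
  · rw [hexp]
    linarith [W]
  · rw [hexp, henergy t ht, heq2]
    linarith [W]
end
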